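/- arXiv:1010.3889 — 6 statements merged into one kernel-verified Lean document; each statement's English description precedes it below -/
import Mathlib

section
/- For every integer n ≥ 0 and every integer x₀, the fermionic p-adic q-integral of y ↦ [x₀+y]_q^n exists and equals ξ_{n,q}(x₀); that is, the sequence N ↦ (1/[p^N]_{−q})·Σ_{y=0}^{p^N−1} [x₀+y]_q^n·(−q)^y converges in ℚ_p to ξ_{n,q}(x₀). Moreover ξ_{n,q}(x₀) = Σ_{l=0}^{n} C(n,l)·[x₀]_q^{n−l}·q^{l·x₀}·ξ_{l,q}. -/
open Finset Filter

/-- `[a]_q = (1 - q^a)/(1 - q)` for `a : ℤ`. -/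
noncomputable def qnum {p : ℕ} [Fact p.Prime] (q : ℚ_[p]) (a : ℤ) : ℚ_[p] :=
  (1 - q ^ a) / (1 - q)

/-- Kim's q-Euler polynomial `ξ_{n,q}(x)` (closed form). -/
noncomputable def xi {p : ℕ} [Fact p.Prime] (q : ℚ_[p]) (n : ℕ) (x : ℤ) : ℚ_[p] :=
  ((1 + q) / (1 - q) ^ n) *
    ∑ l ∈ Finset.range (n + 1),
      (n.choose l : ℚ_[p]) * (-1) ^ l * q ^ ((l : ℤ) * x) / (1 + q ^ (l + 1))

/-- The fermionic p-adic `r`-integral statement: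
`∫_{ℤ_p} g dμ_{-r} = L` means the Riemann-type sums
`(1/[p^N]_{-r}) · Σ_{x=0}^{p^N-1} g(x) (-r)^x` converge to `L`. -/
def fermionicIntegral (p : ℕ) [Fact p.Prime] (r : ℚ_[p]) (g : ℕ → ℚ_[p]) (L : ℚ_[p]) : Prop :=
  Filter.Tendsto
    (fun N : ℕ => ((1 + r) / (1 - (-r) ^ (p ^ N))) * ∑ x ∈ Finset.range (p ^ N), g x * (-r) ^ x)
    Filter.atTop (nhds L)

/-- The q-Bernstein polynomial `B_{k,n}(x,q) = C(n,k) [x]_q^k [1-x]_{1/q}^{n-k}`. -/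
noncomputable def bern {p : ℕ} [Fact p.Prime] (q : ℚ_[p]) (k n : ℕ) (x : ℤ) : ℚ_[p] :=
  (n.choose k : ℚ_[p]) * (qnum q x) ^ k * (qnum q⁻¹ (1 - x)) ^ (n - k)

open Topology IsUltrametricDist

/-! Expanding `[x₀ + y]_q ^ n` binomially turns the Riemann sum over `y < M` into a combination
of geometric sums in `-q ^ (l + 1)`. For odd `M` (such as `M = p ^ N`) these equal
`(1 + (q ^ M) ^ (l + 1)) / (1 + q ^ (l + 1))`, so the Riemann sum is a rational function of `q ^ M`
that is continuous at `1` with value `ξ_{n,q}(x₀)` there. As `p` is odd and `|1 - q|_p < 1`, the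
denominators `1 + q ^ k` do not vanish and `q ^ p ^ N → 1`.

The addition formula is the binomial convolution
`∑ₗ C(n,l) aⁿ⁻ˡ bˡ ∑ⱼ C(l,j) eⱼ = ∑ⱼ C(n,j) (a + b)ⁿ⁻ʲ bʲ eⱼ` with `b = q ^ x₀`, `a = 1 - b`. -/

lemma one_add_ne_zero_of_norm_sub_one_lt {K : Type*} [NormedRing K] (h2 : ‖(2 : K)‖ = 1) {s : K}
    (hs : ‖s - 1‖ < 1) : 1 + s ≠ 0 := by
  intro h
  rw [eq_neg_of_add_eq_zero_right h, show (-1 - 1 : K) = -2 by norm_num, norm_neg, h2] at hs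
  exact hs.false

section Nonarchimedean

variable {K : Type*} [NormedField K] [IsUltrametricDist K] {r : K}

lemma norm_le_one_of_norm_sub_one_lt (hr : ‖r - 1‖ < 1) : ‖r‖ ≤ 1 := by
  simpa [max_eq_right hr.le] using norm_add_one_le_max_norm_one (r - 1)

lemma norm_pow_sub_one_le (hr : ‖r‖ ≤ 1) (k : ℕ) : ‖r ^ k - 1‖ ≤ ‖r - 1‖ := by
  rw [← geom_sum_mul, norm_mul]
  refine mul_le_of_le_one_left (norm_nonneg _) ?_
  exact norm_sum_le_of_forall_le_of_nonneg zero_le_one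
    fun i _ ↦ by rw [norm_pow]; exact pow_le_one₀ (norm_nonneg _) hr

lemma norm_pow_sub_one_le_max_mul (hr : ‖r‖ ≤ 1) (m : ℕ) :
    ‖r ^ m - 1‖ ≤ max ‖(m : K)‖ ‖r - 1‖ * ‖r - 1‖ := by
  have hsplit : ∑ i ∈ range m, r ^ i = ∑ i ∈ range m, (r ^ i - 1) + m := by
    simp [sum_sub_distrib]
  rw [← geom_sum_mul, norm_mul, hsplit]
  refine mul_le_mul_of_nonneg_right ((norm_add_le_max _ _).trans ?_) (norm_nonneg _)
  rw [max_comm]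
  exact max_le_max le_rfl
    (norm_sum_le_of_forall_le_of_nonneg (norm_nonneg _) fun i _ ↦ norm_pow_sub_one_le hr i)

lemma norm_pow_pow_sub_one_le (hr : ‖r‖ ≤ 1) (m N : ℕ) :
    ‖r ^ m ^ N - 1‖ ≤ max ‖(m : K)‖ ‖r - 1‖ ^ N * ‖r - 1‖ := by
  induction N with
  | zero => simp
  | succ N ih =>
    have hs : ‖r ^ m ^ N‖ ≤ 1 := by rw [norm_pow]; exact pow_le_one₀ (norm_nonneg _) hr
    calc ‖r ^ m ^ (N + 1) - 1‖ = ‖(r ^ m ^ N) ^ m - 1‖ := by rw [← pow_mul, pow_succ]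
      _ ≤ max ‖(m : K)‖ ‖r ^ m ^ N - 1‖ * ‖r ^ m ^ N - 1‖ := norm_pow_sub_one_le_max_mul hs m
      _ ≤ max ‖(m : K)‖ ‖r - 1‖ * (max ‖(m : K)‖ ‖r - 1‖ ^ N * ‖r - 1‖) :=
        mul_le_mul (max_le_max le_rfl (norm_pow_sub_one_le hr _)) ih (norm_nonneg _)
          ((norm_nonneg _).trans (le_max_right _ _))
      _ = max ‖(m : K)‖ ‖r - 1‖ ^ (N + 1) * ‖r - 1‖ := by ring

lemma tendsto_pow_pow_nhds_one (hr : ‖r - 1‖ < 1) {m : ℕ} (hm : ‖(m : K)‖ < 1) :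
    Tendsto (fun N ↦ r ^ m ^ N) atTop (𝓝 1) := by
  rw [tendsto_iff_norm_sub_tendsto_zero]
  refine squeeze_zero (fun N ↦ norm_nonneg _)
    (norm_pow_pow_sub_one_le (norm_le_one_of_norm_sub_one_lt hr) m) ?_
  simpa using (tendsto_pow_atTop_nhds_zero_of_lt_one ((norm_nonneg _).trans (le_max_left _ _))
    (max_lt hm hr)).mul_const ‖r - 1‖

end Nonarchimedean

lemma geom_sum_neg_of_odd {K : Type*} [Field K] {s : K} (hs : 1 + s ≠ 0) {M : ℕ} (hM : Odd M) :
    ∑ x ∈ range M, (-s) ^ x = (1 + s ^ M) / (1 + s) := by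
  have hs' : -s - 1 ≠ 0 := fun h ↦ hs (by linear_combination -h)
  rw [geom_sum_eq (fun h ↦ hs' (by rw [h]; ring)), hM.neg_pow, div_eq_div_iff hs' hs]
  ring

lemma sum_Ico_choose_mul_choose_mul_pow {R : Type*} [CommSemiring R] (a b : R) {j n : ℕ}
    (hj : j ≤ n) :
    ∑ l ∈ Ico j (n + 1), (n.choose l * l.choose j : R) * a ^ (n - l) * b ^ l
      = n.choose j * (a + b) ^ (n - j) * b ^ j := by
  rw [sum_Ico_eq_sum_range, show n + 1 - j = n - j + 1 by omega, add_comm a, add_pow,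
    mul_sum, sum_mul]
  refine sum_congr rfl fun k hk ↦ ?_
  have hk : k ≤ n - j := Nat.lt_succ_iff.mp (mem_range.mp hk)
  have hchoose : n.choose (j + k) * (j + k).choose j = n.choose j * (n - j).choose k := by
    rw [Nat.choose_mul (by omega), Nat.add_sub_cancel_left]
  rw [← Nat.cast_mul, hchoose, show n - (j + k) = n - j - k by omega, pow_add]
  push_cast
  ring

theorem sum_choose_mul_pow_mul_sum_choose {R : Type*} [CommSemiring R] (a b : R) (e : ℕ → R)
    (n : ℕ) :
    ∑ l ∈ range (n + 1), n.choose l * a ^ (n - l) * b ^ l * ∑ j ∈ range (l + 1), l.choose j * e j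
      = ∑ j ∈ range (n + 1), n.choose j * (a + b) ^ (n - j) * b ^ j * e j := by
  simp_rw [mul_sum, range_eq_Ico]
  rw [← sum_Ico_Ico_comm]
  refine sum_congr rfl fun j hj ↦ ?_
  rw [← sum_Ico_choose_mul_choose_mul_pow a b (Nat.lt_succ_iff.mp (mem_Ico.mp hj).2), sum_mul]
  exact sum_congr rfl fun l _ ↦ by ring

lemma norm_two_eq_one_of_odd {p : ℕ} [Fact p.Prime] (hp : Odd p) : ‖(2 : ℚ_[p])‖ = 1 := by
  simpa using (Padic.norm_natCast_eq_one_iff (n := 2)).mpr (Nat.coprime_two_right.mpr hp)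

section QEuler

variable {p : ℕ} [Fact p.Prime]

lemma xi_eq_mul_sum (q : ℚ_[p]) (n : ℕ) (x₀ : ℤ) :
    xi q n x₀ = (1 + q) * (1 - q)⁻¹ ^ n *
      ∑ l ∈ range (n + 1), n.choose l * (q ^ x₀) ^ l * ((-1) ^ l / (1 + q ^ (l + 1))) := by
  rw [xi, div_eq_mul_inv, inv_pow]
  congr 1
  refine sum_congr rfl fun l _ ↦ ?_
  rw [zpow_mul', zpow_natCast]
  ring

theorem xi_eq_sum_choose_qnum_pow (q : ℚ_[p]) (n : ℕ) (x₀ : ℤ) :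
    xi q n x₀ = ∑ l ∈ range (n + 1),
      (n.choose l : ℚ_[p]) * (qnum q x₀) ^ (n - l) * q ^ ((l : ℤ) * x₀) * xi q l 0 := by
  set b := q ^ x₀
  set u := (1 - q)⁻¹
  set e : ℕ → ℚ_[p] := fun j ↦ (-1) ^ j / (1 + q ^ (j + 1))
  have hterm : ∀ l ∈ range (n + 1),
      (n.choose l : ℚ_[p]) * (qnum q x₀) ^ (n - l) * q ^ ((l : ℤ) * x₀) * xi q l 0
        = (1 + q) * u ^ n * (n.choose l * (1 - b) ^ (n - l) * b ^ l *
            ∑ j ∈ range (l + 1), l.choose j * e j) := by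
    intro l hl
    rw [xi_eq_mul_sum, qnum, zpow_mul', zpow_natCast, zpow_zero, div_eq_mul_inv, mul_pow,
      ← pow_sub_mul_pow u (Nat.lt_succ_iff.mp (mem_range.mp hl))]
    simp_rw [one_pow, mul_one]
    ring
  rw [sum_congr rfl hterm, ← mul_sum, sum_choose_mul_pow_mul_sum_choose, sub_add_cancel,
    xi_eq_mul_sum]
  simp only [one_pow, mul_one, mul_assoc, b, u, e]

noncomputable def xiTrunc (q : ℚ_[p]) (n : ℕ) (x₀ : ℤ) (t : ℚ_[p]) : ℚ_[p] :=
  (1 + q) / (1 + t) * (1 - q)⁻¹ ^ n *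
    ∑ l ∈ range (n + 1), n.choose l * (q ^ x₀) ^ l * ((-1) ^ l / (1 + q ^ (l + 1))) *
      (1 + t ^ (l + 1))

lemma xiTrunc_one (q : ℚ_[p]) (n : ℕ) (x₀ : ℤ) : xiTrunc q n x₀ 1 = xi q n x₀ := by
  simp only [xiTrunc, xi_eq_mul_sum, one_pow, ← sum_mul]
  ring

lemma continuousAt_xiTrunc_one (q : ℚ_[p]) (n : ℕ) (x₀ : ℤ) :
    ContinuousAt (xiTrunc q n x₀) 1 := by
  unfold xiTrunc
  fun_prop (disch := norm_num)

lemma qnum_add_pow_mul_neg_pow {q : ℚ_[p]} (hq : q ≠ 0) (n : ℕ) (x₀ : ℤ) (x : ℕ) :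
    qnum q (x₀ + x) ^ n * (-q) ^ x = (1 - q)⁻¹ ^ n *
      ∑ l ∈ range (n + 1), n.choose l * (q ^ x₀) ^ l * (-1) ^ l * (-q ^ (l + 1)) ^ x := by
  rw [qnum, zpow_add₀ hq, zpow_natCast, div_eq_mul_inv, mul_pow, sub_eq_neg_add, add_pow,
    sum_mul, sum_mul, mul_sum]
  refine sum_congr rfl fun l _ ↦ ?_
  ring

lemma riemannSum_qnum_pow_eq_xiTrunc {q : ℚ_[p]} (hq : q ≠ 0)
    (hden : ∀ l : ℕ, 1 + q ^ (l + 1) ≠ 0) (n : ℕ) (x₀ : ℤ) {M : ℕ} (hM : Odd M) :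
    (1 + q) / (1 - (-q) ^ M) * ∑ x ∈ range M, qnum q (x₀ + x) ^ n * (-q) ^ x
      = xiTrunc q n x₀ (q ^ M) := by
  simp_rw [qnum_add_pow_mul_neg_pow hq, ← mul_sum]
  rw [sum_comm, xiTrunc, hM.neg_pow, sub_neg_eq_add, mul_assoc]
  congr 2
  refine sum_congr rfl fun l _ ↦ ?_
  rw [← mul_sum, geom_sum_neg_of_odd (hden l) hM, ← pow_mul, mul_comm _ M, pow_mul]
  ring

theorem fermionicIntegral_qnum_pow (hp : Odd p) {q : ℚ_[p]} (hq : ‖1 - q‖ < 1) (n : ℕ) (x₀ : ℤ) :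
    fermionicIntegral p q (fun y ↦ qnum q (x₀ + y) ^ n) (xi q n x₀) := by
  rw [norm_sub_rev] at hq
  have hq0 : q ≠ 0 := by
    rintro rfl
    simp at hq
  have hden (l : ℕ) : 1 + q ^ (l + 1) ≠ 0 :=
    one_add_ne_zero_of_norm_sub_one_lt (norm_two_eq_one_of_odd hp)
      ((norm_pow_sub_one_le (norm_le_one_of_norm_sub_one_lt hq) _).trans_lt hq)
  have hlim := (continuousAt_xiTrunc_one q n x₀).tendsto.comp
    (tendsto_pow_pow_nhds_one hq Padic.norm_p_lt_one)
  rw [xiTrunc_one] at hlim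
  exact hlim.congr fun N ↦ (riemannSum_qnum_pow_eq_xiTrunc hq0 hden n x₀ hp.pow).symm

end QEuler

theorem stmt0_general (p : ℕ) [Fact p.Prime] (hp : Odd p) (q : ℚ_[p]) (hq : ‖1 - q‖ < 1) (n : ℕ) (x₀ : ℤ) :
    fermionicIntegral p q (fun y => (qnum q (x₀ + y)) ^ n) (xi q n x₀) ∧
      xi q n x₀ = ∑ l ∈ Finset.range (n + 1),
        (n.choose l : ℚ_[p]) * (qnum q x₀) ^ (n - l) * q ^ ((l : ℤ) * x₀) * xi q l 0 :=
  ⟨fermionicIntegral_qnum_pow hp hq n x₀, xi_eq_sum_choose_qnum_pow q n x₀⟩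

theorem stmt0 (p : ℕ) [Fact p.Prime] (hp : Odd p) (q : ℚ_[p]) (hq : ‖1 - q‖ < 1) (hq1 : q ≠ 1) (n : ℕ) (x₀ : ℤ) :
    fermionicIntegral p q (fun y => (qnum q (x₀ + y)) ^ n) (xi q n x₀) ∧
      xi q n x₀ = ∑ l ∈ Finset.range (n + 1),
        (n.choose l : ℚ_[p]) * (qnum q x₀) ^ (n - l) * q ^ ((l : ℤ) * x₀) * xi q l 0 :=
  stmt0_general p hp q hq n x₀
end

section
/- (Theorem 1) For every integer n ≥ 1, ξ_{n,q}(2) = 1 + 1/q + (1/q²)·ξ_{n,q}. -/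
open Finset Filter

/-! Since `q ^ (2l + 2) - 1 = (q ^ (l+1) - 1)(q ^ (l+1) + 1)`, the combination `q² ξ(x+2) - ξ(x)`
loses the denominators `1 + q ^ (l+1)` term by term, and what remains are two binomial sums,
`q (1 - q ^ (x+1)) ^ n - (1 - q ^ x) ^ n`. At `x = 0` the second vanishes for `n ≥ 1`.
The denominators are nonzero because `‖1 - q ^ m‖ < 1` while `‖2‖ = 1` for odd `p`. -/

section Ultrametric

variable {R : Type*} [SeminormedRing R] [NormOneClass R] [IsUltrametricDist R]

lemma IsUltrametricDist.norm_le_one_of_norm_one_sub_lt_one {q : R} (hq : ‖1 - q‖ < 1) :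
    ‖q‖ ≤ 1 := by
  simpa using (IsUltrametricDist.norm_add_le_max (1 : R) (-(1 - q))).trans
    (max_le norm_one.le (norm_neg (1 - q) ▸ hq.le))

lemma IsUltrametricDist.norm_one_sub_pow_lt_one {q : R} (hq : ‖1 - q‖ < 1) (m : ℕ) :
    ‖1 - q ^ m‖ < 1 := by
  induction m with
  | zero => simp
  | succ m ih =>
    have hqm : ‖q * (1 - q ^ m)‖ < 1 :=
      (norm_mul_le _ _).trans_lt <| mul_lt_one_of_nonneg_of_lt_one_right
        (norm_le_one_of_norm_one_sub_lt_one hq) (norm_nonneg _) ih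
    calc ‖1 - q ^ (m + 1)‖ = ‖(1 - q) + q * (1 - q ^ m)‖ := by
          rw [pow_succ', mul_sub, mul_one, sub_add_sub_cancel]
      _ ≤ max ‖1 - q‖ ‖q * (1 - q ^ m)‖ := IsUltrametricDist.norm_add_le_max _ _
      _ < 1 := max_lt hq hqm

end Ultrametric

lemma Padic.one_add_pow_ne_zero {p : ℕ} [Fact p.Prime] (hp : Odd p) {q : ℚ_[p]}
    (hq : ‖1 - q‖ < 1) (m : ℕ) : 1 + q ^ m ≠ 0 := by
  intro h
  have h2 := IsUltrametricDist.norm_one_sub_pow_lt_one hq m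
  rw [show 1 - q ^ m = ((2 : ℕ) : ℚ_[p]) by linear_combination -h, norm_natCast_lt_one_iff,
    Nat.prime_dvd_prime_iff_eq Fact.out Nat.prime_two] at h2
  subst h2
  exact Nat.not_odd_iff_even.mpr even_two hp

lemma sum_range_choose_mul_neg_pow {R : Type*} [CommRing R] (a : R) (n : ℕ) :
    ∑ l ∈ range (n + 1), (n.choose l : R) * (-a) ^ l = (1 - a) ^ n := by
  rw [show 1 - a = -a + 1 by ring, add_pow]
  exact sum_congr rfl fun l _ => by ring

lemma xi_add_two {p : ℕ} [Fact p.Prime] {q : ℚ_[p]} (hq0 : q ≠ 0)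
    (hd : ∀ l : ℕ, 1 + q ^ (l + 1) ≠ 0) (n : ℕ) (x : ℤ) :
    q ^ 2 * xi q n (x + 2) =
      xi q n x + (1 + q) / (1 - q) ^ n * (q * (1 - q ^ (x + 1)) ^ n - (1 - q ^ x) ^ n) := by
  have hterm : ∀ l : ℕ,
      q ^ 2 * ((n.choose l : ℚ_[p]) * (-1) ^ l * q ^ ((l : ℤ) * (x + 2)) / (1 + q ^ (l + 1))) =
        (n.choose l : ℚ_[p]) * (-1) ^ l * q ^ ((l : ℤ) * x) / (1 + q ^ (l + 1)) +
          (q * ((n.choose l : ℚ_[p]) * (-q ^ (x + 1)) ^ l) -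
            (n.choose l : ℚ_[p]) * (-q ^ x) ^ l) := by
    intro l
    have hdl := hd l
    simp only [mul_comm (l : ℤ), zpow_mul, zpow_natCast, zpow_add₀ hq0, zpow_one]
    field_simp
    ring
  rw [xi, xi, mul_left_comm, mul_sum, sum_congr rfl fun l _ => hterm l, sum_add_distrib,
    sum_sub_distrib, ← mul_sum, sum_range_choose_mul_neg_pow, sum_range_choose_mul_neg_pow]
  ring

theorem stmt2 (p : ℕ) [Fact p.Prime] (hp : Odd p) (q : ℚ_[p]) (hq : ‖1 - q‖ < 1) (hq1 : q ≠ 1) (n : ℕ) (hn : 1 ≤ n) :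
    xi q n 2 = 1 + 1 / q + (1 / q ^ 2) * xi q n 0 := by
  have hq0 : q ≠ 0 := by rintro rfl; simp at hq
  have hpow : (1 - q) ^ n ≠ 0 := pow_ne_zero _ (sub_ne_zero.mpr hq1.symm)
  have h := xi_add_two hq0 (fun l => Padic.one_add_pow_ne_zero hp hq (l + 1)) n 0
  rw [zero_add, zero_add, zpow_one, zpow_zero, sub_self, zero_pow (by lia), sub_zero] at h
  field_simp at h ⊢
  linear_combination h
end

section
/- (Proposition 2) For every integer n ≥ 0, the fermionic p-adic q-integral of x ↦ [1−x]_{1/q}^n exists and ∫_{ℤ_p} [1−x]_{1/q}^n dμ_{−q}(x) = Σ_{l=0}^{n} C(n,l)·(−1)^l·ξ_{l,q}, and this common value also equals (−1)^n·q^n·ξ_{n,q}(−1). -/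
/-!
On functions of the form `x ↦ P(q ^ x)` with `P` a polynomial, the fermionic `q`-integral is
linear in `P` and is computed on monomials by a geometric sum: for odd `M = p ^ N`,
`∑_{x < M} (q ^ j) ^ x (-q) ^ x = (1 + q ^ ((j + 1) M)) / (1 + q ^ (j + 1))`, and `q ^ p ^ N → 1`
p-adically, so `∫ q ^ (j x) dμ_{-q} = [2]_q / (1 + q ^ (j + 1))`.

Since `[1 - x]_{1/q} = (q ^ x - q) / (1 - q)`, the integral is the value of this functional on
`((X - q) / (1 - q)) ^ n`, while `ξ_{n,q}(x)` is its value on `((1 - q ^ x X) / (1 - q)) ^ n`.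
Both identities are then polynomial identities: the binomial theorem turns
`∑ C(n,l) (-1) ^ l Y ^ l` into `(1 - Y) ^ n`, with `1 - (1 - X) / (1 - q) = (X - q) / (1 - q)`,
and `-q (1 - q⁻¹ X) = X - q`.
-/

open Finset Filter

open Topology

namespace Padic

variable {p : ℕ} [Fact p.Prime] {r s : ℚ_[p]}

theorem norm_le_one_of_norm_one_sub_lt_one (hr : ‖1 - r‖ < 1) : ‖r‖ ≤ 1 := by
  calc ‖r‖ = ‖1 + (r - 1)‖ := by rw [add_sub_cancel]
    _ ≤ 1 := (nonarchimedean _ _).trans (max_le norm_one.le (by rw [norm_sub_rev]; exact hr.le))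

theorem norm_one_sub_mul_lt_one (hr : ‖1 - r‖ < 1) (hs : ‖1 - s‖ < 1) : ‖1 - r * s‖ < 1 := by
  have h : 1 - r * s = r * (1 - s) + (1 - r) := by ring
  rw [h]
  refine (nonarchimedean _ _).trans_lt (max_lt ?_ hr)
  rw [norm_mul]
  exact (mul_le_of_le_one_left (norm_nonneg _) (norm_le_one_of_norm_one_sub_lt_one hr)).trans_lt hs

theorem norm_one_sub_pow_lt_one (hr : ‖1 - r‖ < 1) (m : ℕ) : ‖1 - r ^ m‖ < 1 := by
  induction m with
  | zero => simp
  | succ m ih => simpa [pow_succ] using norm_one_sub_mul_lt_one ih hr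

theorem one_add_ne_zero_of_norm_one_sub_lt_one (hp : Odd p) (hr : ‖1 - r‖ < 1) : 1 + r ≠ 0 := by
  intro h
  have h2 : ‖(2 : ℚ_[p])‖ = 1 := by
    rw [show (2 : ℚ_[p]) = (2 : ℕ) by norm_num, norm_natCast_eq_one_iff,
      Nat.coprime_two_right]
    exact hp
  rw [show (2 : ℚ_[p]) = (1 - r) + (1 + r) by ring, h, add_zero] at h2
  exact hr.ne h2

/-- If `r ≡ 1 (mod p)` then `r ^ p ^ N ≡ 1 (mod p ^ (N + 1))`. -/
theorem tendsto_pow_prime_pow (hr : ‖1 - r‖ < 1) :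
    Tendsto (fun N : ℕ => r ^ p ^ N) atTop (𝓝 1) := by
  set z : ℤ_[p] := ⟨r, norm_le_one_of_norm_one_sub_lt_one hr⟩
  have hz : (p : ℤ_[p]) ∣ z - 1 := by
    rw [← PadicInt.norm_lt_one_iff_dvd, norm_sub_rev]
    exact hr
  have hbound : ∀ N : ℕ, ‖r ^ p ^ N - 1‖ ≤ ‖(p : ℚ_[p])‖ ^ (N + 1) := fun N => by
    obtain ⟨c, hc⟩ := dvd_sub_pow_of_dvd_sub hz N
    have hc' : r ^ p ^ N - 1 = (p : ℚ_[p]) ^ (N + 1) * c := by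
      simpa using congrArg ((↑) : ℤ_[p] → ℚ_[p]) hc
    rw [hc', norm_mul, norm_pow]
    exact mul_le_of_le_one_right (by positivity) c.norm_le_one
  rw [tendsto_iff_norm_sub_tendsto_zero]
  refine squeeze_zero (fun N => norm_nonneg _) hbound ?_
  exact (tendsto_pow_atTop_nhds_zero_of_lt_one (norm_nonneg _) norm_p_lt_one).comp
    (tendsto_add_atTop_nat 1)

end Padic

namespace fermionicIntegral

variable {p : ℕ} [Fact p.Prime] {r : ℚ_[p]} {g₁ g₂ : ℕ → ℚ_[p]} {L₁ L₂ : ℚ_[p]}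

theorem add (h₁ : fermionicIntegral p r g₁ L₁) (h₂ : fermionicIntegral p r g₂ L₂) :
    fermionicIntegral p r (fun x => g₁ x + g₂ x) (L₁ + L₂) := by
  refine (Tendsto.add h₁ h₂).congr fun N => ?_
  simp only [add_mul, sum_add_distrib, mul_add]

theorem const_mul (a : ℚ_[p]) (h : fermionicIntegral p r g₁ L₁) :
    fermionicIntegral p r (fun x => a * g₁ x) (a * L₁) := by
  refine (Tendsto.const_mul a h).congr fun N => ?_
  simp only [mul_assoc, mul_sum, mul_left_comm a]

end fermionicIntegral

open Padic in
/-- Over `x < p ^ N` (an odd number) the sum of `(-r s) ^ x` is `(1 + (r s) ^ p ^ N) / (1 + r s)`,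
and `(r s) ^ p ^ N → 1`. -/
theorem fermionicIntegral_pow {p : ℕ} [Fact p.Prime] (hp : Odd p) {r s : ℚ_[p]}
    (hr : ‖1 - r‖ < 1) (hs : ‖1 - s‖ < 1) :
    fermionicIntegral p r (fun x => s ^ x) ((1 + r) / (1 + r * s)) := by
  have hrs := norm_one_sub_mul_lt_one hr hs
  have hrs₀ : 1 + r * s ≠ 0 := one_add_ne_zero_of_norm_one_sub_lt_one hp hrs
  have hne : -(r * s) ≠ 1 := fun h => hrs₀ (by linear_combination -h)
  have hsum : ∀ N : ℕ, ((1 + r) / (1 - (-r) ^ p ^ N)) * ∑ x ∈ range (p ^ N), s ^ x * (-r) ^ x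
      = (1 + r) / (1 + r ^ p ^ N) * ((1 + (r * s) ^ p ^ N) / (1 + r * s)) := fun N => by
    have hodd : Odd (p ^ N) := hp.pow
    have hgeom : ∑ x ∈ range (p ^ N), s ^ x * (-r) ^ x = (1 + (r * s) ^ p ^ N) / (1 + r * s) := by
      simp only [← mul_pow, show s * -r = -(r * s) by ring, geom_sum_eq hne, hodd.neg_pow]
      rw [div_eq_div_iff (sub_ne_zero.mpr hne) hrs₀]
      ring
    rw [hgeom, hodd.neg_pow, sub_neg_eq_add]
  have hlim : Tendsto
      (fun N : ℕ => (1 + r) / (1 + r ^ p ^ N) * ((1 + (r * s) ^ p ^ N) / (1 + r * s))) atTop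
      (𝓝 ((1 + r) / (1 + 1) * ((1 + 1) / (1 + r * s)))) :=
    (tendsto_const_nhds.div (tendsto_const_nhds.add (tendsto_pow_prime_pow hr)) (by norm_num)).mul
      ((tendsto_const_nhds.add (tendsto_pow_prime_pow hrs)).div_const _)
  rw [div_mul_div_cancel₀ (by norm_num)] at hlim
  exact hlim.congr fun N => (hsum N).symm

theorem LinearMap.map_one_sub_pow {R A : Type*} [CommRing R] [CommRing A] [Algebra R A]
    (L : A →ₗ[R] R) (Y : A) (n : ℕ) :
    L ((1 - Y) ^ n) = ∑ m ∈ Finset.range (n + 1), (n.choose m : R) * (-1) ^ m * L (Y ^ m) := by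
  rw [sub_eq_neg_add, add_pow, map_sum]
  refine sum_congr rfl fun m _ => ?_
  have hterm :
      (-Y) ^ m * 1 ^ (n - m) * (n.choose m : A) = ((n.choose m : R) * (-1) ^ m) • Y ^ m := by
    rw [Algebra.smul_def, one_pow, mul_one, neg_pow]
    simp only [map_mul, map_pow, map_neg, map_one, map_natCast]
    ring
  rw [hterm, map_smul, smul_eq_mul]

open Polynomial

section fermionicMoment

variable {K : Type*} [Field K]

/-- `P ↦ ∫ P(q ^ x) dμ_{-q}(x)`, determined by
`∫ q ^ (j x) dμ_{-q}(x) = [2]_q / (1 + q ^ (j + 1))`. -/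
noncomputable def fermionicMoment (q : K) : K[X] →ₗ[K] K :=
  lsum fun j => ((1 + q) / (1 + q ^ (j + 1))) • LinearMap.id

theorem fermionicMoment_monomial (q : K) (j : ℕ) (a : K) :
    fermionicMoment q (monomial j a) = (1 + q) / (1 + q ^ (j + 1)) * a := by
  simp [fermionicMoment, sum_monomial_index]

theorem fermionicMoment_C_mul_pow (q a : K) (Y : K[X]) (n : ℕ) :
    fermionicMoment q ((C a * Y) ^ n) = a ^ n * fermionicMoment q (Y ^ n) := by
  rw [mul_pow, ← map_pow, ← smul_eq_C_mul, map_smul, smul_eq_mul]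

theorem fermionicMoment_one_sub_C_mul_X_pow (q b : K) (n : ℕ) :
    fermionicMoment q ((1 - C b * X) ^ n)
      = ∑ l ∈ range (n + 1),
          (n.choose l : K) * (-1) ^ l * b ^ l * ((1 + q) / (1 + q ^ (l + 1))) := by
  rw [LinearMap.map_one_sub_pow]
  refine sum_congr rfl fun l _ => ?_
  rw [mul_pow, ← map_pow, C_mul_X_pow_eq_monomial, fermionicMoment_monomial]
  ring

end fermionicMoment

section

variable {p : ℕ} [Fact p.Prime] {q : ℚ_[p]}

theorem qnum_inv_one_sub (hq0 : q ≠ 0) (hq1 : q ≠ 1) (x : ℤ) :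
    qnum q⁻¹ (1 - x) = (q ^ x - q) / (1 - q) := by
  have h1q : 1 - q ≠ 0 := sub_ne_zero.mpr hq1.symm
  have h1q' : 1 - q⁻¹ ≠ 0 := sub_ne_zero.mpr (inv_ne_one.mpr hq1).symm
  rw [qnum, inv_zpow', neg_sub, zpow_sub₀ hq0, zpow_one, div_eq_div_iff h1q' h1q]
  field_simp
  ring

theorem fermionicIntegral_eval (hp : Odd p) (hq : ‖1 - q‖ < 1) (P : ℚ_[p][X]) :
    fermionicIntegral p q (fun x => P.eval (q ^ x)) (fermionicMoment q P) := by
  induction P using Polynomial.induction_on' with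
  | add P Q hP hQ => simpa only [eval_add, map_add] using hP.add hQ
  | monomial j a =>
    have h := (fermionicIntegral_pow hp hq (Padic.norm_one_sub_pow_lt_one hq j)).const_mul a
    rw [← pow_succ', mul_comm a] at h
    simp only [eval_monomial, fermionicMoment_monomial, pow_right_comm q _ j]
    exact h

theorem xi_eq_fermionicMoment (q : ℚ_[p]) (n : ℕ) (x : ℤ) :
    xi q n x = fermionicMoment q ((C (1 - q)⁻¹ * (1 - C (q ^ x) * X)) ^ n) := by
  rw [fermionicMoment_C_mul_pow, fermionicMoment_one_sub_C_mul_X_pow, xi, mul_sum, mul_sum]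
  refine sum_congr rfl fun l _ => ?_
  rw [mul_comm (l : ℤ), zpow_mul, zpow_natCast]
  ring

theorem sum_choose_mul_xi_zero (hq1 : q ≠ 1) (n : ℕ) :
    ∑ l ∈ range (n + 1), (n.choose l : ℚ_[p]) * (-1) ^ l * xi q l 0
      = fermionicMoment q ((C (1 - q)⁻¹ * (X - C q)) ^ n) := by
  have hC : C (1 - q)⁻¹ * (1 - C q) = 1 := by
    rw [← C_1, ← C_sub, ← C_mul, inv_mul_cancel₀ (sub_ne_zero.mpr hq1.symm)]
  simp only [xi_eq_fermionicMoment, zpow_zero, C_1, one_mul]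
  rw [← LinearMap.map_one_sub_pow]
  congr 2
  linear_combination -hC

theorem neg_pow_mul_pow_mul_xi_neg_one (hq0 : q ≠ 0) (n : ℕ) :
    (-1) ^ n * q ^ n * xi q n (-1) = fermionicMoment q ((C (1 - q)⁻¹ * (X - C q)) ^ n) := by
  have hC : C q * C q⁻¹ = 1 := by rw [← C_mul, mul_inv_cancel₀ hq0, C_1]
  rw [xi_eq_fermionicMoment, zpow_neg_one, ← mul_pow, neg_one_mul, ← fermionicMoment_C_mul_pow,
    C_neg]
  congr 2
  linear_combination (C (1 - q)⁻¹ * X) * hC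

end

theorem stmt3 (p : ℕ) [Fact p.Prime] (hp : Odd p) (q : ℚ_[p]) (hq : ‖1 - q‖ < 1) (hq1 : q ≠ 1) (n : ℕ) :
    fermionicIntegral p q (fun x => (qnum q⁻¹ (1 - x)) ^ n)
      (∑ l ∈ Finset.range (n + 1), (n.choose l : ℚ_[p]) * (-1) ^ l * xi q l 0) ∧
      (∑ l ∈ Finset.range (n + 1), (n.choose l : ℚ_[p]) * (-1) ^ l * xi q l 0)
        = (-1) ^ n * q ^ n * xi q n (-1) := by
  have hq0 : q ≠ 0 := by
    rintro rfl
    simp at hq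
  rw [sum_choose_mul_xi_zero hq1, neg_pow_mul_pow_mul_xi_neg_one hq0]
  refine ⟨?_, rfl⟩
  convert fermionicIntegral_eval hp hq ((C (1 - q)⁻¹ * (X - C q)) ^ n) using 2 with x
  rw [qnum_inv_one_sub hq0 hq1, zpow_natCast]
  simp [div_eq_inv_mul]
end

section
/- (Corollary 4) For every integer n ≥ 0, ξ_{n,1/q}(2) = (−1)^n·q^n·ξ_{n,q}(−1), where ξ_{n,1/q} denotes the q-Euler polynomial with parameter 1/q in place of q. -/
/-!
Replacing `q` by `q⁻¹` in the closed form of `ξ_{n,q}(x)` and clearing the negative powers of `q`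
from each denominator, `1 + q⁻¹ ^ (l + 1) = q⁻¹ ^ (l + 1) (1 + q ^ (l + 1))`, shifts the argument
to `1 - x` and pulls out a factor `q`; the prefactor contributes `(-1) ^ n q ^ (n - 1)`, since
`1 - q⁻¹ = -q⁻¹ (1 - q)`. This gives `ξ_{n,q⁻¹}(x) = (-1) ^ n q ^ n ξ_{n,q}(1 - x)` for every `q ≠ 0`.
-/

open Finset Filter

section Field

variable {K : Type*} [Field K] {q : K}

lemma one_add_inv_pow (hq : q ≠ 0) (m : ℕ) : 1 + q⁻¹ ^ m = q⁻¹ ^ m * (1 + q ^ m) := by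
  rw [mul_add, mul_one, ← mul_pow, inv_mul_cancel₀ hq, one_pow, add_comm]

lemma mul_inv_zpow_div_one_add_inv_pow_succ (hq : q ≠ 0) (c : K) (l : ℕ) (x : ℤ) :
    c * q⁻¹ ^ ((l : ℤ) * x) / (1 + q⁻¹ ^ (l + 1)) =
      q * (c * q ^ ((l : ℤ) * (1 - x)) / (1 + q ^ (l + 1))) := by
  have hexp : q⁻¹ ^ ((l : ℤ) * x) * q ^ (l + 1) = q * q ^ ((l : ℤ) * (1 - x)) := by
    rw [inv_zpow', ← zpow_natCast, ← zpow_add₀ hq, ← zpow_one_add₀ hq]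
    push_cast
    ring_nf
  rw [one_add_inv_pow hq, div_mul_eq_div_div, inv_pow, div_inv_eq_mul, mul_assoc c, hexp]
  ring

lemma one_add_inv_div_one_sub_inv_pow_mul (hq : q ≠ 0) (n : ℕ) :
    (1 + q⁻¹) / (1 - q⁻¹) ^ n * q = (-1) ^ n * q ^ n * ((1 + q) / (1 - q) ^ n) := by
  have h_add : 1 + q⁻¹ = q⁻¹ * (1 + q) := by field_simp; ring
  have h_sub : 1 - q⁻¹ = -q⁻¹ * (1 - q) := by field_simp; ring
  rw [h_add, h_sub, mul_pow, neg_pow, inv_pow]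
  field_simp
  rw [← pow_mul, pow_mul', neg_one_sq, one_pow, mul_one]

end Field

lemma xi_inv {p : ℕ} [Fact p.Prime] {q : ℚ_[p]} (hq : q ≠ 0) (n : ℕ) (x : ℤ) :
    xi q⁻¹ n x = (-1) ^ n * q ^ n * xi q n (1 - x) := by
  simp only [xi]
  rw [sum_congr rfl fun l _ => mul_inv_zpow_div_one_add_inv_pow_succ hq _ l x, ← mul_sum,
    ← mul_assoc, one_add_inv_div_one_sub_inv_pow_mul hq, mul_assoc]

theorem stmt5_general (p : ℕ) [Fact p.Prime] (q : ℚ_[p]) (hq : ‖1 - q‖ < 1) (n : ℕ) :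
    xi q⁻¹ n 2 = (-1) ^ n * q ^ n * xi q n (-1) := by
  have hq0 : q ≠ 0 := by
    rintro rfl
    simp at hq
  rw [xi_inv hq0]
  norm_num

theorem stmt5 (p : ℕ) [Fact p.Prime] (hp : Odd p) (q : ℚ_[p]) (hq : ‖1 - q‖ < 1) (hq1 : q ≠ 1) (n : ℕ) :
    xi q⁻¹ n 2 = (-1) ^ n * q ^ n * xi q n (-1) :=
  stmt5_general p q hq n
end

section
/- (Theorem 6) For all n, k ∈ ℕ with k ≤ n, Σ_{l=0}^{n−k} C(n−k,l)·(−1)^l·ξ_{k+l,q} = Σ_{l=0}^{k} C(k,l)·(−1)^{k+l}·ξ_{n−l,1/q}(2), where ξ_{m,1/q} denotes the q-Euler polynomial with parameter 1/q in place of q. -/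
/-!
Write `X` for `q^x`. Kim's fermionic integral `∫ f(q^x) dμ_{-q}(x)` is the linear functional on
`K[X]` sending `X^j` to `[2]_q / (1 + q^{j+1})`. With `u = [x]_q = (1 - X)/(1 - q)` one has
`1 - u = [1 - x]_{1/q}`, and the closed forms show that `ξ_{m,q}` is the integral of `u^m` while
`ξ_{m,1/q}(2)` is the integral of `(1 - u)^m`. Both sides of the identity are therefore the
integral of `u^k (1 - u)^{n-k}`: the left side expands `(1 - u)^{n-k}` binomially, the right side
expands `u^k = (1 - (1 - u))^k`.
-/

open Finset Filter

open Polynomial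

section Binomial

variable {A R F : Type*} [CommRing A] [Ring R] [FunLike F A R] [AddMonoidHomClass F A R]

theorem sum_choose_mul_neg_one_pow_mul_map_pow (L : F) (u : A) (j m : ℕ) :
    ∑ l ∈ range (m + 1), (m.choose l : R) * (-1) ^ l * L (u ^ (j + l)) =
      L (u ^ j * (1 - u) ^ m) := by
  rw [show (1 : A) - u = -u + 1 by ring, add_pow, mul_sum, map_sum]
  refine sum_congr rfl fun l _ => ?_
  have hterm : u ^ j * ((-u) ^ l * 1 ^ (m - l) * m.choose l) =
      (m.choose l * (-1) ^ l : ℤ) • u ^ (j + l) := by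
    rw [zsmul_eq_mul]; push_cast; ring
  rw [hterm, map_zsmul, zsmul_eq_mul]
  push_cast
  rfl

theorem sum_choose_mul_neg_one_pow_mul_map_one_sub_pow (L : F) (u : A) {k n : ℕ} (hkn : k ≤ n) :
    ∑ l ∈ range (k + 1), (k.choose l : R) * (-1) ^ (k + l) * L ((1 - u) ^ (n - l)) =
      L (u ^ k * (1 - u) ^ (n - k)) := by
  have h := sum_choose_mul_neg_one_pow_mul_map_pow L (1 - u) (n - k) k
  rw [sub_sub_cancel, mul_comm] at h
  rw [← h, ← sum_range_reflect]
  refine sum_congr rfl fun l hl => ?_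
  have hlk : l ≤ k := Nat.le_of_lt_succ (mem_range.mp hl)
  rw [add_tsub_cancel_right, Nat.choose_symm hlk, show n - (k - l) = n - k + l by omega,
    show k + (k - l) = l + 2 * (k - l) by omega, pow_add, pow_mul]
  simp

end Binomial

section Functional

variable {K : Type*} [Field K]

/-- The fermionic integral `f ↦ ∫ f(q^x) dμ_{-q}(x)`, with `X` standing for `q^x`. -/
noncomputable def qEulerFunctional (q : K) : K[X] →ₗ[K] K :=
  lsum fun j => ((1 + q) / (1 + q ^ (j + 1))) • LinearMap.id

noncomputable def qNumPoly (q : K) : K[X] := C (1 - q)⁻¹ * (1 - X)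

theorem qEulerFunctional_C_mul_X_pow (q c : K) (j : ℕ) :
    qEulerFunctional q (C c * X ^ j) = c * ((1 + q) / (1 + q ^ (j + 1))) := by
  rw [C_mul_X_pow_eq_monomial]
  simp [qEulerFunctional, mul_comm]

theorem qEulerFunctional_C_mul_one_sub_C_mul_X_pow (q c b : K) (m : ℕ) :
    qEulerFunctional q (C c * (1 - C b * X) ^ m) =
      c * ∑ i ∈ range (m + 1), m.choose i * (-b) ^ i * ((1 + q) / (1 + q ^ (i + 1))) := by
  rw [show (1 : K[X]) - C b * X = -(C b * X) + 1 by ring, add_pow, mul_sum, map_sum, mul_sum]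
  refine sum_congr rfl fun i _ => ?_
  rw [show C c * ((-(C b * X)) ^ i * 1 ^ (m - i) * (m.choose i : K[X])) =
      C (c * m.choose i * (-b) ^ i) * X ^ i by
        simp only [map_mul, map_pow, map_neg, map_natCast]; ring,
    qEulerFunctional_C_mul_X_pow]
  ring

theorem one_sub_qNumPoly {q : K} (hq0 : q ≠ 0) (hq1 : q ≠ 1) :
    1 - qNumPoly q = C (1 - q⁻¹)⁻¹ * (1 - C q⁻¹ * X) := by
  have hD : 1 - q ≠ 0 := sub_ne_zero.mpr hq1.symm
  have hconst : C (1 - (1 - q)⁻¹) = C (1 - q⁻¹)⁻¹ := by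
    congr 1; field_simp; ring
  have hlin : C (1 - q)⁻¹ = -(C (1 - q⁻¹)⁻¹ * C q⁻¹) := by
    rw [← C_mul, ← C_neg]; congr 1; field_simp; ring
  rw [map_sub, map_one] at hconst
  rw [qNumPoly]
  linear_combination hconst + X * hlin

end Functional

section Xi

variable {p : ℕ} [Fact p.Prime]

theorem xi_zero_eq_qEulerFunctional (q : ℚ_[p]) (m : ℕ) :
    xi q m 0 = qEulerFunctional q (qNumPoly q ^ m) := by
  rw [qNumPoly, mul_pow, ← C_pow, show (1 : ℚ_[p][X]) - X = 1 - C 1 * X by simp,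
    qEulerFunctional_C_mul_one_sub_C_mul_X_pow, xi, mul_sum, mul_sum]
  refine sum_congr rfl fun i _ => ?_
  simp only [mul_zero, zpow_zero]
  ring

theorem xi_inv_two_eq_qEulerFunctional {q : ℚ_[p]} (hq0 : q ≠ 0) (hq1 : q ≠ 1) (m : ℕ) :
    xi q⁻¹ m 2 = qEulerFunctional q ((1 - qNumPoly q) ^ m) := by
  rw [one_sub_qNumPoly hq0 hq1, mul_pow, ← C_pow, qEulerFunctional_C_mul_one_sub_C_mul_X_pow,
    xi, mul_sum, mul_sum]
  refine sum_congr rfl fun i _ => ?_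
  have hden : (1 + q⁻¹ ^ (i + 1))⁻¹ = q ^ (i + 1) * (1 + q ^ (i + 1))⁻¹ := by
    have hsum : 1 + (q ^ (i + 1))⁻¹ = (q ^ (i + 1))⁻¹ * (1 + q ^ (i + 1)) := by
      field_simp
      ring
    rw [inv_pow, hsum, mul_inv, inv_inv]
  have hweight : (1 + q⁻¹) * q⁻¹ ^ (2 * i) * q ^ (i + 1) = q⁻¹ ^ i * (1 + q) := by
    rw [inv_pow, inv_pow]
    field_simp
    ring
  rw [show (i : ℤ) * 2 = ((2 * i : ℕ) : ℤ) by push_cast; ring, zpow_natCast,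
    div_eq_mul_inv _ (1 + _), hden]
  linear_combination (m.choose i * (-1) ^ i * (1 + q ^ (i + 1))⁻¹ * ((1 - q⁻¹) ^ m)⁻¹) * hweight

end Xi

theorem stmt8_general (p : ℕ) [Fact p.Prime] (q : ℚ_[p]) (hq : ‖1 - q‖ < 1) (hq1 : q ≠ 1) (n k : ℕ) (hkn : k ≤ n) :
    ∑ l ∈ Finset.range (n - k + 1), ((n - k).choose l : ℚ_[p]) * (-1) ^ l * xi q (k + l) 0
      = ∑ l ∈ Finset.range (k + 1), (k.choose l : ℚ_[p]) * (-1) ^ (k + l) * xi q⁻¹ (n - l) 2 := by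
  have hq0 : q ≠ 0 := by
    rintro rfl
    simp at hq
  simp only [xi_zero_eq_qEulerFunctional, xi_inv_two_eq_qEulerFunctional hq0 hq1]
  rw [sum_choose_mul_neg_one_pow_mul_map_pow,
    sum_choose_mul_neg_one_pow_mul_map_one_sub_pow _ _ hkn]

theorem stmt8 (p : ℕ) [Fact p.Prime] (hp : Odd p) (q : ℚ_[p]) (hq : ‖1 - q‖ < 1) (hq1 : q ≠ 1) (n k : ℕ) (hkn : k ≤ n) :
    ∑ l ∈ Finset.range (n - k + 1), ((n - k).choose l : ℚ_[p]) * (-1) ^ l * xi q (k + l) 0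
      = ∑ l ∈ Finset.range (k + 1), (k.choose l : ℚ_[p]) * (-1) ^ (k + l) * xi q⁻¹ (n - l) 2 :=
  stmt8_general p q hq hq1 n k hkn
end

section
/- (Corollary 7, first part) For all n, k ∈ ℕ with n > k ≥ 1, Σ_{l=0}^{n−k} C(n−k,l)·(−1)^l·ξ_{k+l,q} = q²·Σ_{l=0}^{k} C(k,l)·(−1)^{k+l}·ξ_{n−l,1/q}, where ξ_{m,1/q} denotes the q-Euler number with parameter 1/q in place of q. -/
/-!
Put `X = q^x`. Then `[x]_q` is the polynomial `Y = (1 - X)/(1 - q)`, and Kim's fermionic integral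
becomes a linear functional `M_q` on `ℚ_p[X]` with `ξ_{a,q} = M_q(Y^a)`. By the binomial theorem the
left side is `M_q(Y^k (1 - Y)^(n-k))` and the right side is `q² M_{1/q}(Y'^(n-k) (1 - Y')^k)` with
`Y' = [x]_{1/q} = -qY`. The translation `X ↦ qX` sends `Y` to `1 + qY = 1 - Y'` and `1 - Y` to
`-qY = Y'`, and for polynomials vanishing at `X = 1` the translation formula of the fermionic integral
gives `M_q(P) = -q M_q(P(qX)) = -q M_{1/q}(P)`.
-/

open Finset Filter

open Polynomial

section Binomial

variable {R A : Type*} [CommRing R] [CommRing A] [Algebra R A]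

theorem sum_range_choose_smul_pow_mul_one_sub_pow (y : A) (k m : ℕ) :
    ∑ l ∈ range (m + 1), ((m.choose l : R) * (-1) ^ l) • y ^ (k + l) = y ^ k * (1 - y) ^ m := by
  rw [sub_eq_neg_add, add_pow, mul_sum]
  refine sum_congr rfl fun l _ => ?_
  rw [Algebra.smul_def, map_mul, map_pow, map_neg, map_one, map_natCast]
  ring

theorem sum_range_choose_smul_pow_sub_mul_one_sub_pow (y : A) {k n : ℕ} (hkn : k ≤ n) :
    ∑ l ∈ range (k + 1), ((k.choose l : R) * (-1) ^ (k + l)) • y ^ (n - l)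
      = y ^ (n - k) * (1 - y) ^ k := by
  rw [← sum_range_choose_smul_pow_mul_one_sub_pow (R := R), ← sum_range_reflect]
  refine sum_congr rfl fun l hl => ?_
  have hlk : l ≤ k := Nat.lt_succ_iff.mp (mem_range.mp hl)
  rw [Nat.add_sub_cancel, Nat.choose_symm hlk, show n - (k - l) = n - k + l by omega,
    show k + (k - l) = l + 2 * (k - l) by omega, pow_add, pow_mul, neg_one_sq, one_pow, mul_one]

end Binomial

section Functional

variable {K : Type*} [Field K]

/-- Kim's fermionic integral `∫_{ℤ_p} P(q^x) dμ_{-q}(x)` of a polynomial in `q^x`, determined by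
`∫ q^{jx} dμ_{-q}(x) = [2]_q / (1 + q^{j+1})`. -/
noncomputable def fermionicFunctional (q : K) : K[X] →ₗ[K] K :=
  lsum fun j => LinearMap.toSpanSingleton K K ((1 + q) / (1 + q ^ (j + 1)))

theorem fermionicFunctional_monomial (q c : K) (j : ℕ) :
    fermionicFunctional q (monomial j c) = c * ((1 + q) / (1 + q ^ (j + 1))) := by
  rw [fermionicFunctional, lsum_apply, sum_monomial_index _ _ (by simp),
    LinearMap.toSpanSingleton_apply, smul_eq_mul]

theorem fermionicFunctional_X_pow (q : K) (j : ℕ) :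
    fermionicFunctional q (X ^ j) = (1 + q) / (1 + q ^ (j + 1)) := by
  rw [← monomial_one_right_eq_X_pow, fermionicFunctional_monomial, one_mul]

/-- The translation formula `q ∫ f(x + 1) dμ_{-q} + ∫ f(x) dμ_{-q} = [2]_q f(0)` for `f(x) = P(q^x)`. -/
theorem fermionicFunctional_add_mul_comp {q : K} (hq : ∀ j : ℕ, 1 + q ^ (j + 1) ≠ 0)
    (P : K[X]) :
    fermionicFunctional q P + q * fermionicFunctional q (P.comp (C q * X))
      = (1 + q) * P.eval 1 := by
  induction P using Polynomial.induction_on' with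
  | add P Q hP hQ =>
    rw [add_comp, map_add, map_add, eval_add]
    linear_combination hP + hQ
  | monomial j c =>
    rw [monomial_comp, mul_pow, ← C_pow, ← mul_assoc, ← C_mul, C_mul_X_pow_eq_monomial,
      fermionicFunctional_monomial, fermionicFunctional_monomial, eval_monomial, one_pow, mul_one]
    field_simp [hq j]
    ring

theorem fermionicFunctional_inv {q : K} (hq : q ≠ 0) (P : K[X]) :
    fermionicFunctional q⁻¹ P = fermionicFunctional q (P.comp (C q * X)) := by
  induction P using Polynomial.induction_on' with
  | add P Q hP hQ => rw [add_comp, map_add, map_add, hP, hQ]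
  | monomial j c =>
    rw [monomial_comp, mul_pow, ← C_pow, ← mul_assoc, ← C_mul, C_mul_X_pow_eq_monomial,
      fermionicFunctional_monomial, fermionicFunctional_monomial, inv_pow,
      ← mul_div_mul_right _ _ (pow_ne_zero (j + 1) hq)]
    field_simp
    ring

theorem fermionicFunctional_eq_neg_mul_comp {q : K} (hq : ∀ j : ℕ, 1 + q ^ (j + 1) ≠ 0)
    {P : K[X]} (hP : P.eval 1 = 0) :
    fermionicFunctional q P = -q * fermionicFunctional q (P.comp (C q * X)) := by
  linear_combination fermionicFunctional_add_mul_comp hq P + (1 + q) * hP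

theorem fermionicFunctional_eq_neg_mul_inv {q : K} (hq0 : q ≠ 0)
    (hq : ∀ j : ℕ, 1 + q ^ (j + 1) ≠ 0) {P : K[X]} (hP : P.eval 1 = 0) :
    fermionicFunctional q P = -q * fermionicFunctional q⁻¹ P := by
  rw [fermionicFunctional_inv hq0]
  exact fermionicFunctional_eq_neg_mul_comp hq hP

theorem qNumPoly_eval_one (q : K) : (qNumPoly q).eval 1 = 0 := by
  simp [qNumPoly]

theorem qNumPoly_pow_mul_eval_one (q : K) {a : ℕ} (ha : a ≠ 0) (P : K[X]) :
    (qNumPoly q ^ a * P).eval 1 = 0 := by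
  rw [eval_mul, eval_pow, qNumPoly_eval_one, zero_pow ha, zero_mul]

theorem qNumPoly_comp {q : K} (hq : q ≠ 1) :
    (qNumPoly q).comp (C q * X) = 1 + C q * qNumPoly q := by
  have h : C (1 - q)⁻¹ * (1 - C q) = (1 : K[X]) := by
    rw [← C_1, ← C_sub, ← C_mul, inv_mul_cancel₀ (sub_ne_zero.mpr hq.symm)]
  simp only [qNumPoly, mul_comp, sub_comp, one_comp, C_comp, X_comp]
  linear_combination h

theorem qNumPoly_inv {q : K} (hq : q ≠ 0) : qNumPoly q⁻¹ = -(C q * qNumPoly q) := by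
  have h : (1 - q⁻¹)⁻¹ = -(q * (1 - q)⁻¹) := by
    rw [show 1 - q⁻¹ = (q - 1) * q⁻¹ by field_simp, mul_inv, inv_inv, ← neg_sub, inv_neg]
    ring
  rw [qNumPoly, qNumPoly, h]
  simp only [map_neg, map_mul]
  ring

end Functional

theorem xi_zero_eq {p : ℕ} [Fact p.Prime] (q : ℚ_[p]) (a : ℕ) :
    xi q a 0 = fermionicFunctional q (qNumPoly q ^ a) := by
  have h := sum_range_choose_smul_pow_mul_one_sub_pow (R := ℚ_[p]) (X : ℚ_[p][X]) 0 a
  simp only [zero_add, pow_zero, one_mul] at h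
  rw [qNumPoly, mul_pow, ← C_pow, ← smul_eq_C_mul, map_smul, ← h, map_sum, xi, smul_eq_mul]
  simp only [mul_sum, map_smul, fermionicFunctional_X_pow, smul_eq_mul, mul_zero, zpow_zero]
  refine sum_congr rfl fun l _ => ?_
  ring

namespace Padic

variable {p : ℕ} [Fact p.Prime]

theorem norm_one_sub_pow_lt_one_s9 {q : ℚ_[p]} (hq : ‖1 - q‖ < 1) (m : ℕ) : ‖1 - q ^ m‖ < 1 := by
  have hq_le : ‖q‖ ≤ 1 := by
    calc ‖q‖ = ‖1 + -(1 - q)‖ := by congr 1; ring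
      _ ≤ 1 := (IsUltrametricDist.norm_add_le_max _ _).trans
        (max_le norm_one.le ((norm_neg _).trans_le hq.le))
  induction m with
  | zero => simp
  | succ m ih =>
    calc ‖1 - q ^ (m + 1)‖ = ‖q * (1 - q ^ m) + (1 - q)‖ := by congr 1; ring
      _ ≤ max ‖q * (1 - q ^ m)‖ ‖1 - q‖ := IsUltrametricDist.norm_add_le_max _ _
      _ < 1 := by
        refine max_lt ?_ hq
        rw [norm_mul]
        exact lt_of_le_of_lt (mul_le_of_le_one_left (norm_nonneg _) hq_le) ih

theorem one_add_pow_ne_zero_s9 (hp : p ≠ 2) {q : ℚ_[p]} (hq : ‖1 - q‖ < 1) (m : ℕ) :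
    1 + q ^ m ≠ 0 := by
  intro h
  have h2 : ‖((2 : ℕ) : ℚ_[p])‖ < 1 := by
    rw [show ((2 : ℕ) : ℚ_[p]) = 1 - q ^ m by push_cast; linear_combination h]
    exact norm_one_sub_pow_lt_one_s9 hq m
  exact hp ((Nat.prime_dvd_prime_iff_eq Fact.out Nat.prime_two).mp (norm_natCast_lt_one_iff.mp h2))

end Padic

theorem stmt9 (p : ℕ) [Fact p.Prime] (hp : Odd p) (q : ℚ_[p]) (hq : ‖1 - q‖ < 1) (hq1 : q ≠ 1) (n k : ℕ) (hk : 1 ≤ k) (hkn : k < n) :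
    ∑ l ∈ Finset.range (n - k + 1), ((n - k).choose l : ℚ_[p]) * (-1) ^ l * xi q (k + l) 0
      = q ^ 2 * ∑ l ∈ Finset.range (k + 1),
          (k.choose l : ℚ_[p]) * (-1) ^ (k + l) * xi q⁻¹ (n - l) 0 := by
  have hq0 : q ≠ 0 := by rintro rfl; simp at hq
  have hden : ∀ j : ℕ, 1 + q ^ (j + 1) ≠ 0 :=
    fun j => Padic.one_add_pow_ne_zero_s9 (by rintro rfl; norm_num at hp) hq (j + 1)
  calc _ = fermionicFunctional q (qNumPoly q ^ k * (1 - qNumPoly q) ^ (n - k)) := by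
        rw [← sum_range_choose_smul_pow_mul_one_sub_pow (R := ℚ_[p]), map_sum]
        simp only [map_smul, smul_eq_mul, xi_zero_eq]
    _ = -q * fermionicFunctional q
          ((qNumPoly q ^ k * (1 - qNumPoly q) ^ (n - k)).comp (C q * X)) :=
        fermionicFunctional_eq_neg_mul_comp hden (qNumPoly_pow_mul_eval_one q (by omega) _)
    _ = -q * fermionicFunctional q (qNumPoly q⁻¹ ^ (n - k) * (1 - qNumPoly q⁻¹) ^ k) := by
        rw [mul_comp, pow_comp, pow_comp, sub_comp, one_comp, qNumPoly_comp hq1, qNumPoly_inv hq0]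
        ring_nf
    _ = -q * (-q * fermionicFunctional q⁻¹ (qNumPoly q⁻¹ ^ (n - k) * (1 - qNumPoly q⁻¹) ^ k)) := by
        rw [← fermionicFunctional_eq_neg_mul_inv hq0 hden
          (qNumPoly_pow_mul_eval_one q⁻¹ (by omega) _)]
    _ = _ := by
        rw [← sum_range_choose_smul_pow_sub_mul_one_sub_pow (R := ℚ_[p]) _ hkn.le, map_sum]
        simp only [map_smul, smul_eq_mul, xi_zero_eq]
        ring
end
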